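/- arXiv:2202.03516 — 9 statements merged into one kernel-verified Lean document; each statement's English description precedes it below -/
import Mathlib

section
/- The box product is closed: for any graphs F, G, H, the map sending a graph map φ : F □ G → H to the function v ↦ φ(v,−) is a bijection from the set of graph maps F □ G → H to the set of graph maps F → Hom(G,H). -/
/-- A map of simple graphs: adjacent vertices are sent to equal or adjacent vertices. -/
def IsGraphMap {V W : Type*} (G : SimpleGraph V) (H : SimpleGraph W) (f : V → W) : Prop :=
  ∀ ⦃v w : V⦄, G.Adj v w → f v = f w ∨ H.Adj (f v) (f w)

/-- The hom-graph `Hom(G,H)`: vertices are graph maps `G → H`, and `f ∼ g` iff `f ≠ g` and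
for every vertex `v`, either `f v = g v` or `f v ∼ g v` in `H`. -/
def homGraph {V W : Type*} (G : SimpleGraph V) (H : SimpleGraph W) :
    SimpleGraph {f : V → W // IsGraphMap G H f} where
  Adj f g := f ≠ g ∧ ∀ v : V, f.1 v = g.1 v ∨ H.Adj (f.1 v) (g.1 v)
  symm := by
    constructor
    rintro f g ⟨hne, h⟩
    exact ⟨hne.symm, fun v => (h v).imp Eq.symm SimpleGraph.Adj.symm⟩
  loopless := ⟨fun f h => h.1 rfl⟩

/-! A graph map `F □ G → H` is a family of graph maps `G → H`, one per vertex of `F`, such that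
adjacent vertices of `F` give pointwise equal-or-adjacent maps. That pointwise condition is exactly
"equal or adjacent in `Hom(G,H)`", so currying and uncurrying are mutually inverse. -/

section

variable {U V W : Type*} {F : SimpleGraph U} {G : SimpleGraph V} {H : SimpleGraph W}

theorem homGraph_eq_or_adj_iff {f g : {f : V → W // IsGraphMap G H f}} :
    f = g ∨ (homGraph G H).Adj f g ↔ ∀ v, f.1 v = g.1 v ∨ H.Adj (f.1 v) (g.1 v) := by
  refine ⟨?_, fun h => or_iff_not_imp_left.2 fun hne => ⟨hne, h⟩⟩
  rintro (rfl | ⟨-, h⟩)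
  · exact fun _ => Or.inl rfl
  · exact h

theorem IsGraphMap.curry_apply {φ : U × V → W} (hφ : IsGraphMap (F.boxProd G) H φ) (u : U) :
    IsGraphMap G H fun v => φ (u, v) :=
  fun _ _ h => hφ (SimpleGraph.boxProd_adj_right.2 h)

theorem IsGraphMap.curry {φ : U × V → W} (hφ : IsGraphMap (F.boxProd G) H φ) :
    IsGraphMap F (homGraph G H) fun u => ⟨fun v => φ (u, v), hφ.curry_apply u⟩ :=
  fun _ _ h => homGraph_eq_or_adj_iff.2 fun _ =>
    hφ (SimpleGraph.boxProd_adj_left.2 h)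

theorem IsGraphMap.uncurry {ψ : U → {f : V → W // IsGraphMap G H f}}
    (hψ : IsGraphMap F (homGraph G H) ψ) :
    IsGraphMap (F.boxProd G) H fun p => (ψ p.1).1 p.2 := by
  rintro ⟨u, v⟩ ⟨u', v'⟩ (⟨hF, rfl⟩ | ⟨hG, rfl⟩)
  · exact homGraph_eq_or_adj_iff.1 (hψ hF) v
  · exact (ψ u).2 hG

variable (F G H)

def boxProdCurryEquiv :
    {φ : U × V → W // IsGraphMap (F.boxProd G) H φ} ≃
      {ψ : U → {f : V → W // IsGraphMap G H f} // IsGraphMap F (homGraph G H) ψ} where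
  toFun φ := ⟨_, φ.2.curry⟩
  invFun ψ := ⟨_, ψ.2.uncurry⟩
  left_inv _ := rfl
  right_inv _ := rfl

end

/-- The box product is closed: currying `φ ↦ (v ↦ φ(v,−))` is a bijection from the set of
graph maps `F □ G → H` to the set of graph maps `F → Hom(G,H)`. -/
theorem boxProd_closed {U V W : Type*} (F : SimpleGraph U) (G : SimpleGraph V)
    (H : SimpleGraph W) :
    ∃ e : {φ : U × V → W // IsGraphMap (F.boxProd G) H φ} ≃
        {ψ : U → {f : V → W // IsGraphMap G H f} // IsGraphMap F (homGraph G H) ψ},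
      ∀ (φ : {φ : U × V → W // IsGraphMap (F.boxProd G) H φ}) (u : U) (v : V),
        ((e φ).1 u).1 v = φ.1 (u, v) :=
  ⟨boxProdCurryEquiv F G H, fun _ _ _ => rfl⟩
end

section
/- The category of graphs is complete and cocomplete: the category whose objects are graphs, whose morphisms are graph maps, and whose identities and composition are those of underlying functions has all small limits and all small colimits. -/
open CategoryTheory CategoryTheory.Limits

universe u

/-- An object of the category of graphs: a type of vertices together with a simple graph
structure on it. -/
structure GraphObj : Type (u + 1) where
  carrier : Type u
  graph : SimpleGraph carrier

/-- The category of graphs: morphisms are graph maps, identities and composition are those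
of the underlying functions. -/
instance : Category.{u} GraphObj.{u} where
  Hom A B := {f : A.carrier → B.carrier // IsGraphMap A.graph B.graph f}
  id A := ⟨id, fun v w h => Or.inr h⟩
  comp f g := ⟨g.1 ∘ f.1, fun v w h => by
    rcases f.2 h with he | ha
    · exact Or.inl (congrArg g.1 he)
    · exact g.2 ha⟩
  id_comp f := Subtype.ext rfl
  comp_id f := Subtype.ext rfl
  assoc f g h := Subtype.ext rfl

/-!
Graphs form a topological category over types: any family of functions into (resp. out of) the
vertex types of graphs carries a coarsest (resp. finest) graph structure making all of them graph
maps, and maps out of (resp. into) it are graph maps exactly when their composites are. Hence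
limits and colimits are computed on the underlying types, i.e. on compatible families and on the
quotient of the disjoint union. Since graph maps may collapse edges, two distinct compatible
families are adjacent when they are componentwise equal or adjacent.
-/

open SimpleGraph

theorem isGraphMap_fromRel {V W : Type*} {G : SimpleGraph V} {r : W → W → Prop} {f : V → W}
    (h : ∀ ⦃v w⦄, G.Adj v w → r (f v) (f w)) : IsGraphMap G (fromRel r) f := by
  intro v w hvw
  by_cases heq : f v = f w
  · exact Or.inl heq
  · exact Or.inr ⟨heq, Or.inl (h hvw)⟩

theorem isGraphMap_of_fromRel {V W : Type*} {r : V → V → Prop} {H : SimpleGraph W} {f : V → W}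
    (h : ∀ ⦃a b⦄, r a b → f a = f b ∨ H.Adj (f a) (f b)) : IsGraphMap (fromRel r) H f := by
  rintro a b ⟨-, hab | hba⟩
  · exact h hab
  · exact (h hba).imp Eq.symm H.adj_symm

section InitialFinal

variable {ι : Sort*} {V : ι → Type*} {X W : Type*}

def initialGraph (G : ∀ i, SimpleGraph (V i)) (f : ∀ i, X → V i) : SimpleGraph X :=
  fromRel fun x y => ∀ i, f i x = f i y ∨ (G i).Adj (f i x) (f i y)

def finalGraph (G : ∀ i, SimpleGraph (V i)) (f : ∀ i, V i → X) : SimpleGraph X :=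
  fromRel fun a b => ∃ i x y, (G i).Adj x y ∧ f i x = a ∧ f i y = b

variable {G : ∀ i, SimpleGraph (V i)}

theorem isGraphMap_initialGraph (f : ∀ i, X → V i) (i : ι) :
    IsGraphMap (initialGraph G f) (G i) (f i) :=
  isGraphMap_of_fromRel fun _ _ h => h i

theorem isGraphMap_initialGraph_of_forall {f : ∀ i, X → V i} {H : SimpleGraph W} {g : W → X}
    (h : ∀ i, IsGraphMap H (G i) (f i ∘ g)) : IsGraphMap H (initialGraph G f) g :=
  isGraphMap_fromRel fun _ _ hvw i => h i hvw

theorem isGraphMap_finalGraph (f : ∀ i, V i → X) (i : ι) :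
    IsGraphMap (G i) (finalGraph G f) (f i) :=
  isGraphMap_fromRel fun x y hxy => ⟨i, x, y, hxy, rfl, rfl⟩

theorem isGraphMap_finalGraph_of_forall {f : ∀ i, V i → X} {H : SimpleGraph W} {g : X → W}
    (h : ∀ i, IsGraphMap (G i) H (g ∘ f i)) : IsGraphMap (finalGraph G f) H g := by
  refine isGraphMap_of_fromRel ?_
  rintro _ _ ⟨i, x, y, hxy, rfl, rfl⟩
  exact h i hxy

end InitialFinal

namespace GraphObj

theorem hom_ext {A B : GraphObj.{u}} {f g : A ⟶ B} (h : ∀ x, f.1 x = g.1 x) : f = g :=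
  Subtype.ext (funext h)

theorem congr_hom {A B : GraphObj.{u}} {f g : A ⟶ B} (h : f = g) (x : A.carrier) :
    f.1 x = g.1 x :=
  h ▸ rfl

def forget : GraphObj.{u} ⥤ Type u where
  obj A := A.carrier
  map f := TypeCat.ofHom f.1

variable {J : Type u} [SmallCategory J] (F : J ⥤ GraphObj.{u})

def limitCone : Cone F where
  pt := ⟨(F ⋙ forget).sections, initialGraph (fun j => (F.obj j).graph) fun j s => s.1 j⟩
  π.app j := ⟨fun s => s.1 j, isGraphMap_initialGraph _ j⟩
  π.naturality _ _ f := hom_ext fun s => (s.2 f).symm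

def limitConeIsLimit : IsLimit (limitCone F) where
  lift c := ⟨fun v => ⟨fun j => (c.π.app j).1 v, fun f => congr_hom (c.w f) v⟩,
    isGraphMap_initialGraph_of_forall fun j => (c.π.app j).2⟩
  fac _ _ := rfl
  uniq _ _ hm := hom_ext fun v => Subtype.ext (funext fun j => congr_hom (hm j) v)

def colimitCocone : Cocone F where
  pt := ⟨(F ⋙ forget).ColimitType,
    finalGraph (fun j => (F.obj j).graph) (F ⋙ forget).ιColimitType⟩
  ι.app j := ⟨(F ⋙ forget).ιColimitType j,
    isGraphMap_finalGraph (G := fun j => (F.obj j).graph) _ j⟩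
  ι.naturality _ _ f := hom_ext ((F ⋙ forget).ιColimitType_map f)

def colimitCoconeIsColimit : IsColimit (colimitCocone F) where
  desc c := ⟨(F ⋙ forget).descColimitType
      { pt := c.pt.carrier
        ι j := (c.ι.app j).1
        ι_naturality f := funext (congr_hom (c.w f)) },
    isGraphMap_finalGraph_of_forall fun j => (c.ι.app j).2⟩
  fac _ _ := rfl
  uniq _ m hm := hom_ext fun a => by
    obtain ⟨j, x, rfl⟩ := (F ⋙ forget).ιColimitType_jointly_surjective a
    exact congr_hom (hm j) x

end GraphObj

/-- The category of graphs is complete and cocomplete: it has all small limits and all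
small colimits. -/
theorem graph_complete_cocomplete :
    HasLimits GraphObj.{u} ∧ HasColimits GraphObj.{u} :=
  ⟨⟨fun _ _ => ⟨fun F => .mk ⟨_, GraphObj.limitConeIsLimit F⟩⟩⟩,
    ⟨fun _ _ => ⟨fun F => .mk ⟨_, GraphObj.colimitCoconeIsColimit F⟩⟩⟩⟩
end

section
/- The filler map Φ is well defined: for m ≥ 1, n ≥ 2, i ∈ {1,…,n}, and ε ∈ {0,1}, the map Φ : I_{3m}^{□n} → I_m^{□n} given by Φ(v)_k = c^m(v_k) for k ≠ i and Φ(v)_i = (1−ε)·m + (2ε−1)·β_{α_{1−ε}(v_i)}( d_i(v) − α_ε(v_i) ) is a graph map (adjacent vertices are sent to equal or adjacent vertices), and every vertex in its image lies in the open box ⊓(m; n, i, ε); hence Φ co-restricts to a graph map I_{3m}^{□n} → ⊓(m; n, i, ε). -/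
/-- Clamp an integer to the interval `[a, b]`. -/
def clampZ (a b v : ℤ) : ℤ := min (max v a) b

/-- The collapse map `c^m : I_{3m} → I_m`: `0` on `[0,m]`, `v - m` on `[m,2m]`, `m` on `[2m,3m]`. -/
def cmZ (m v : ℤ) : ℤ := min (max (v - m) 0) m

/-- `α_η(u) = η·m + (1 − 2η)·c^m(u)`. -/
def alphaZ (m η u : ℤ) : ℤ := η * m + (1 - 2 * η) * cmZ m u

/-- `d_i(v) = Σ_{k ≠ i} |v_k − φ̃(v_k)|`, where `φ̃` clamps to `[m, 2m]`. -/
def dCore (m : ℤ) {n : ℕ} (i : Fin n) (v : Fin n → ℤ) : ℤ :=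
  ∑ k ∈ Finset.univ.erase i, |v k - clampZ m (2 * m) (v k)|

/-- The filler map `Φ : I_{3m}^{□n} → I_m^{□n}`, with
`Φ(v)_k = c^m(v_k)` for `k ≠ i` and
`Φ(v)_i = (1−ε)·m + (2ε−1)·β_{α_{1−ε}(v_i)}(d_i(v) − α_ε(v_i))`,
where `β_t` clamps to `[0, t]`. -/
def PhiZ (m : ℤ) {n : ℕ} (i : Fin n) (ε : ℤ) (v : Fin n → ℤ) : Fin n → ℤ := fun k =>
  if k = i then
    (1 - ε) * m + (2 * ε - 1) *
      clampZ 0 (alphaZ m (1 - ε) (v i)) (dCore m i v - alphaZ m ε (v i))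
  else cmZ m (v k)

/-- Adjacency in a box power, with vertices encoded as integer tuples:
exactly one coordinate changes, by `1`. -/
def boxAdjZ {k : ℕ} (v w : Fin k → ℤ) : Prop :=
  ∃ i, (v i + 1 = w i ∨ w i + 1 = v i) ∧ ∀ j, j ≠ i → v j = w j

/-- Membership in the open box `⊓(m; n, i, ε) ⊆ I_m^{□n}`: all coordinates lie in `[0, m]`
and some coordinate `v_j = η·m` with `(j, η) ≠ (i, ε)`. -/
def inOpenBox (m : ℤ) {n : ℕ} (i : Fin n) (ε : ℤ) (v : Fin n → ℤ) : Prop :=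
  (∀ k, 0 ≤ v k ∧ v k ≤ m) ∧
    ∃ (j : Fin n) (η : ℤ), (η = 0 ∨ η = 1) ∧ ¬(j = i ∧ η = ε) ∧ v j = η * m

/-- The absolute-value distance to the clamp interval `[m, 2m]`, rewritten with `max`. -/
lemma absTerm (m x : ℤ) (hm : 0 ≤ m) :
    |x - clampZ m (2 * m) x| = max (m - x) 0 + max (x - 2 * m) 0 := by
  rcases abs_cases (x - clampZ m (2 * m) x) with ⟨h1, h2⟩ | ⟨h1, h2⟩ <;>
    unfold clampZ at * <;> omega

lemma dCore_nonneg (m : ℤ) {n : ℕ} (i : Fin n) (v : Fin n → ℤ) : 0 ≤ dCore m i v :=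
  Finset.sum_nonneg fun _ _ => abs_nonneg _

lemma dCore_congr (m : ℤ) {n : ℕ} (i : Fin n) (v w : Fin n → ℤ)
    (h : ∀ k, k ≠ i → v k = w k) : dCore m i v = dCore m i w :=
  Finset.sum_congr rfl fun k hk => by rw [h k (Finset.ne_of_mem_erase hk)]

lemma dCore_diff (m : ℤ) {n : ℕ} (i j : Fin n) (v w : Fin n → ℤ) (hji : j ≠ i)
    (h : ∀ k, k ≠ j → v k = w k) :
    dCore m i w = dCore m i v - |v j - clampZ m (2 * m) (v j)|
      + |w j - clampZ m (2 * m) (w j)| := by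
  have hj : j ∈ Finset.univ.erase i := Finset.mem_erase.2 ⟨hji, Finset.mem_univ j⟩
  unfold dCore
  rw [← Finset.sum_erase_add _ _ hj, ← Finset.sum_erase_add _ _ hj]
  have hs : ∑ k ∈ (Finset.univ.erase i).erase j, |w k - clampZ m (2 * m) (w k)|
      = ∑ k ∈ (Finset.univ.erase i).erase j, |v k - clampZ m (2 * m) (v k)| :=
    Finset.sum_congr rfl fun k hk => by rw [h k (Finset.ne_of_mem_erase hk)]
  rw [hs]; ring

lemma phiI_lipschitz_D (m ε x D D' : ℤ) (hε : ε = 0 ∨ ε = 1) (hm : 1 ≤ m)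
    (hD : D = D' ∨ D + 1 = D' ∨ D' + 1 = D) :
    (1 - ε) * m + (2 * ε - 1) * clampZ 0 (alphaZ m (1 - ε) x) (D - alphaZ m ε x)
      = (1 - ε) * m + (2 * ε - 1) * clampZ 0 (alphaZ m (1 - ε) x) (D' - alphaZ m ε x) ∨
    ((1 - ε) * m + (2 * ε - 1) * clampZ 0 (alphaZ m (1 - ε) x) (D - alphaZ m ε x) + 1
      = (1 - ε) * m + (2 * ε - 1) * clampZ 0 (alphaZ m (1 - ε) x) (D' - alphaZ m ε x) ∨
    (1 - ε) * m + (2 * ε - 1) * clampZ 0 (alphaZ m (1 - ε) x) (D' - alphaZ m ε x) + 1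
      = (1 - ε) * m + (2 * ε - 1) * clampZ 0 (alphaZ m (1 - ε) x) (D - alphaZ m ε x)) := by
  unfold clampZ alphaZ cmZ
  rcases hε with rfl | rfl <;> omega

lemma phiI_lipschitz_x (m ε D x y : ℤ) (hε : ε = 0 ∨ ε = 1) (hm : 1 ≤ m)
    (hadj : x + 1 = y ∨ y + 1 = x) :
    (1 - ε) * m + (2 * ε - 1) * clampZ 0 (alphaZ m (1 - ε) x) (D - alphaZ m ε x)
      = (1 - ε) * m + (2 * ε - 1) * clampZ 0 (alphaZ m (1 - ε) y) (D - alphaZ m ε y) ∨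
    ((1 - ε) * m + (2 * ε - 1) * clampZ 0 (alphaZ m (1 - ε) x) (D - alphaZ m ε x) + 1
      = (1 - ε) * m + (2 * ε - 1) * clampZ 0 (alphaZ m (1 - ε) y) (D - alphaZ m ε y) ∨
    (1 - ε) * m + (2 * ε - 1) * clampZ 0 (alphaZ m (1 - ε) y) (D - alphaZ m ε y) + 1
      = (1 - ε) * m + (2 * ε - 1) * clampZ 0 (alphaZ m (1 - ε) x) (D - alphaZ m ε x)) := by
  unfold clampZ alphaZ cmZ
  rcases hε with rfl | rfl <;> omega

lemma cm_cases (m p q : ℤ) (hm : 1 ≤ m) (hadj : p + 1 = q ∨ q + 1 = p)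
    (hc : cmZ m p ≠ cmZ m q) :
    (cmZ m p + 1 = cmZ m q ∨ cmZ m q + 1 = cmZ m p) ∧
      max (m - p) 0 + max (p - 2 * m) 0 = 0 ∧ max (m - q) 0 + max (q - 2 * m) 0 = 0 := by
  unfold cmZ at *
  omega

lemma dstep_cases (m p q D D' : ℤ) (hm : 1 ≤ m) (hadj : p + 1 = q ∨ q + 1 = p)
    (hd : D' = D - (max (m - p) 0 + max (p - 2 * m) 0) + (max (m - q) 0 + max (q - 2 * m) 0)) :
    D = D' ∨ D + 1 = D' ∨ D' + 1 = D := by omega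

lemma phiI_bounds (m ε x D : ℤ) (hε : ε = 0 ∨ ε = 1) (hm : 1 ≤ m) :
    0 ≤ (1 - ε) * m + (2 * ε - 1) * clampZ 0 (alphaZ m (1 - ε) x) (D - alphaZ m ε x) ∧
    (1 - ε) * m + (2 * ε - 1) * clampZ 0 (alphaZ m (1 - ε) x) (D - alphaZ m ε x) ≤ m := by
  unfold clampZ alphaZ cmZ
  rcases hε with rfl | rfl <;> omega

/-- The filler map `Φ` is well defined: it is a graph map `I_{3m}^{□n} → I_m^{□n}`
(adjacent vertices are sent to equal or adjacent vertices), and every vertex in its image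
lies in the open box `⊓(m; n, i, ε)`; hence `Φ` co-restricts to a graph map
`I_{3m}^{□n} → ⊓(m; n, i, ε)`. -/
theorem Phi_well_defined (m n : ℕ) (hm : 1 ≤ m) (hn : 2 ≤ n) (i : Fin n) (ε : ℤ)
    (hε : ε = 0 ∨ ε = 1) :
    (∀ v w : Fin n → ℤ,
      (∀ k, 0 ≤ v k ∧ v k ≤ 3 * (m : ℤ)) → (∀ k, 0 ≤ w k ∧ w k ≤ 3 * (m : ℤ)) →
      boxAdjZ v w →
      PhiZ (m : ℤ) i ε v = PhiZ (m : ℤ) i ε w ∨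
        boxAdjZ (PhiZ (m : ℤ) i ε v) (PhiZ (m : ℤ) i ε w)) ∧
    (∀ v : Fin n → ℤ, (∀ k, 0 ≤ v k ∧ v k ≤ 3 * (m : ℤ)) →
      inOpenBox (m : ℤ) i ε (PhiZ (m : ℤ) i ε v)) := by
  have hm' : (1 : ℤ) ≤ (m : ℤ) := by exact_mod_cast hm
  have ei : ∀ u : Fin n → ℤ, PhiZ (m : ℤ) i ε u i
      = (1 - ε) * (m : ℤ) + (2 * ε - 1) *
        clampZ 0 (alphaZ (m : ℤ) (1 - ε) (u i)) (dCore (m : ℤ) i u - alphaZ (m : ℤ) ε (u i)) :=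
    fun u => if_pos rfl
  have ej : ∀ (u : Fin n → ℤ) (k : Fin n), k ≠ i → PhiZ (m : ℤ) i ε u k = cmZ (m : ℤ) (u k) :=
    fun u k hk => if_neg hk
  constructor
  · rintro v w hv hw ⟨j, hadj, hoff⟩
    by_cases hji : j = i
    · -- adjacency along coordinate i
      subst hji
      have hd : dCore (m : ℤ) j v = dCore (m : ℤ) j w :=
        dCore_congr _ _ _ _ fun k hk => hoff k hk
      have hP := phiI_lipschitz_x (m : ℤ) ε (dCore (m : ℤ) j v) (v j) (w j) hε hm' hadj
      rw [← ei v, hd, ← ei w] at hP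
      rcases hP with h | h | h
      · left; funext k
        by_cases hk : k = j
        · subst hk; exact h
        · rw [ej v k hk, ej w k hk, hoff k hk]
      · right
        exact ⟨j, Or.inl h, fun k hk => by rw [ej v k hk, ej w k hk, hoff k hk]⟩
      · right
        exact ⟨j, Or.inr h, fun k hk => by rw [ej v k hk, ej w k hk, hoff k hk]⟩
    · -- adjacency along a coordinate j ≠ i
      have hvi : v i = w i := hoff i fun h => hji h.symm
      have hd := dCore_diff (m : ℤ) i j v w hji hoff
      rw [absTerm _ _ (by omega), absTerm _ _ (by omega)] at hd
      by_cases hc : cmZ (m : ℤ) (v j) = cmZ (m : ℤ) (w j)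
      · -- the j-th output coordinate does not move; the i-th moves by at most 1
        have hq : PhiZ (m : ℤ) i ε v j = PhiZ (m : ℤ) i ε w j := by
          rw [ej v j hji, ej w j hji, hc]
        have hD := dstep_cases (m : ℤ) (v j) (w j) (dCore (m : ℤ) i v) (dCore (m : ℤ) i w)
          hm' hadj hd
        have hP := phiI_lipschitz_D (m : ℤ) ε (w i) (dCore (m : ℤ) i v) (dCore (m : ℤ) i w)
          hε hm' hD
        have eiv : PhiZ (m : ℤ) i ε v i
            = (1 - ε) * (m : ℤ) + (2 * ε - 1) *
              clampZ 0 (alphaZ (m : ℤ) (1 - ε) (w i))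
                (dCore (m : ℤ) i v - alphaZ (m : ℤ) ε (w i)) := by
          rw [ei v, hvi]
        rw [← eiv, ← ei w] at hP
        rcases hP with h | h | h
        · left; funext k
          by_cases hk : k = i
          · subst hk; exact h
          · by_cases hk' : k = j
            · subst hk'; exact hq
            · rw [ej v k hk, ej w k hk, hoff k hk']
        · refine Or.inr ⟨i, Or.inl h, fun k hk => ?_⟩
          by_cases hk' : k = j
          · subst hk'; exact hq
          · rw [ej v k hk, ej w k hk, hoff k hk']
        · refine Or.inr ⟨i, Or.inr h, fun k hk => ?_⟩
          by_cases hk' : k = j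
          · subst hk'; exact hq
          · rw [ej v k hk, ej w k hk, hoff k hk']
      · -- the j-th output coordinate moves by 1; the i-th stays fixed
        obtain ⟨hadj', hz1, hz2⟩ := cm_cases (m : ℤ) (v j) (w j) hm' hadj hc
        have hDD : dCore (m : ℤ) i v = dCore (m : ℤ) i w := by omega
        have hP : PhiZ (m : ℤ) i ε v i = PhiZ (m : ℤ) i ε w i := by
          rw [ei v, ei w, hvi, hDD]
        rw [← ej v j hji, ← ej w j hji] at hadj'
        refine Or.inr ⟨j, hadj', fun k hk => ?_⟩
        by_cases hk' : k = i
        · subst hk'; exact hP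
        · rw [ej v k hk', ej w k hk', hoff k hk]
  · intro v hv
    have hD : 0 ≤ dCore (m : ℤ) i v := dCore_nonneg _ _ _
    constructor
    · intro k
      by_cases hk : k = i
      · rw [hk, ei v]
        exact phiI_bounds (m : ℤ) ε (v i) (dCore (m : ℤ) i v) hε hm'
      · rw [ej v k hk]
        unfold cmZ
        omega
    · by_cases hd : dCore (m : ℤ) i v - alphaZ (m : ℤ) ε (v i) ≤ 0
      · refine ⟨i, 1 - ε, by omega, by rintro ⟨-, h⟩; omega, ?_⟩
        rw [ei v]
        unfold clampZ alphaZ cmZ at *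
        rcases hε with rfl | rfl <;> omega
      · have hne : dCore (m : ℤ) i v ≠ 0 := by
          have h0 : 0 ≤ alphaZ (m : ℤ) ε (v i) := by
            unfold alphaZ cmZ; rcases hε with rfl | rfl <;> omega
          omega
        unfold dCore at hne
        obtain ⟨k, hk, hk0⟩ := Finset.exists_ne_zero_of_sum_ne_zero hne
        have hki : k ≠ i := Finset.ne_of_mem_erase hk
        rw [absTerm _ _ (by omega)] at hk0
        rcases (show v k < (m : ℤ) ∨ 2 * (m : ℤ) < v k by omega) with h | h
        · refine ⟨k, 0, Or.inl rfl, by rintro ⟨rfl, -⟩; exact hki rfl, ?_⟩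
          rw [ej v k hki]; unfold cmZ; omega
        · refine ⟨k, 1, Or.inr rfl, by rintro ⟨rfl, -⟩; exact hki rfl, ?_⟩
          rw [ej v k hki]; unfold cmZ; omega
end

section
/- The filler map Φ extends the m-fold collapse on the open box: for m ≥ 1, n ≥ 2, i ∈ {1,…,n}, and ε ∈ {0,1}, for every vertex v = (v_1,…,v_n) of the open box ⊓(3m; n, i, ε) ⊆ I_{3m}^{□n} one has Φ(v) = (c^m(v_1),…,c^m(v_n)); that is, the triangle consisting of the inclusion ⊓(3m; n, i, ε) ⊆ I_{3m}^{□n}, the map Φ : I_{3m}^{□n} → ⊓(m; n, i, ε), and the componentwise map c^m : ⊓(3m; n, i, ε) → ⊓(m; n, i, ε) commutes. -/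
/-- The filler map `Φ` extends the `m`-fold collapse on the open box: for every vertex `v`
of the open box `⊓(3m; n, i, ε) ⊆ I_{3m}^{□n}`, `Φ(v) = (c^m(v_1), …, c^m(v_n))`; i.e. the
triangle formed by the inclusion `⊓(3m; n, i, ε) ⊆ I_{3m}^{□n}`, the map `Φ`, and the
componentwise collapse `c^m` commutes. -/
theorem Phi_extends_collapse (m n : ℕ) (hm : 1 ≤ m) (hn : 2 ≤ n) (i : Fin n) (ε : ℤ)
    (hε : ε = 0 ∨ ε = 1) :
    ∀ v : Fin n → ℤ, inOpenBox (3 * (m : ℤ)) i ε v →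
      ∀ k, PhiZ (m : ℤ) i ε v k = cmZ (m : ℤ) (v k) := by
  rintro v ⟨hbox, j, η, hη, hne, hj⟩ k
  by_cases hk : k = i
  · subst hk
    simp only [PhiZ, if_pos rfl]
    have hd0 : 0 ≤ dCore (m:ℤ) k v := Finset.sum_nonneg fun _ _ => abs_nonneg _
    have hvi := hbox k
    set d := dCore (m:ℤ) k v with hd
    by_cases hji : j = k
    · subst hji
      have hηε : η ≠ ε := fun h => hne ⟨rfl, h⟩
      rcases hη with h0 | h1 <;> rcases hε with e0 | e1 <;> subst_vars <;>
        simp only [clampZ, cmZ, alphaZ] at * <;> omega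
    · have hjmem : j ∈ Finset.univ.erase k := Finset.mem_erase.mpr ⟨hji, Finset.mem_univ j⟩
      have habs : (m:ℤ) ≤ |v j - clampZ m (2*m) (v j)| := by
        rcases abs_cases (v j - clampZ (m:ℤ) (2*m) (v j)) with ⟨h,_⟩ | ⟨h,_⟩ <;>
          rw [h] <;> simp only [clampZ] at * <;> rcases hη with h'|h' <;> subst h' <;> omega
      have hdm : (m:ℤ) ≤ d :=
        le_trans habs (Finset.single_le_sum (fun k _ => abs_nonneg (v k - clampZ m (2*m) (v k))) hjmem)
      rcases hε with e0 | e1 <;> subst_vars <;>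
        simp only [clampZ, cmZ, alphaZ] <;> omega
  · simp [PhiZ, hk]
end

section
/- Open-box filling theorem for graphs (the combinatorial core of the Kan property of the nerve): let G be a graph, m, n ≥ 1, i ∈ {1,…,n}, and ε ∈ {0,1}. For every graph map g : ⊓(m; n, i, ε) → G there exists a graph map h : I_{3m}^{□n} → G such that h(v_1,…,v_n) = g(c^m(v_1),…,c^m(v_n)) for every vertex (v_1,…,v_n) of the open box ⊓(3m; n, i, ε) ⊆ I_{3m}^{□n}. -/
namespace OBF

/-- Auxiliary: distance of `v j` to the allowed faces (coordinate `i` excluded, counted as `m`). -/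
def fZ (m : ℤ) {n : ℕ} (i : Fin n) (v : Fin n → ℤ) (j : Fin n) : ℤ :=
  if j = i then m else min (v j) (3 * m - v j)

/-- `μ(v) = min(m, min_{j ≠ i} min(v j, 3m - v j))`. -/
def muZ (m : ℤ) {n : ℕ} (i : Fin n) (v : Fin n → ℤ) : ℤ :=
  Finset.univ.fold min m (fZ m i v)

variable {m : ℤ} {n : ℕ} {i : Fin n} {v w : Fin n → ℤ}

lemma muZ_le_base : muZ m i v ≤ m :=
  (Finset.fold_min_le _).2 (Or.inl le_rfl)

lemma muZ_le {j : Fin n} (hj : j ≠ i) : muZ m i v ≤ min (v j) (3 * m - v j) :=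
  (Finset.fold_min_le _).2 (Or.inr ⟨j, Finset.mem_univ j, by simp [fZ, hj]⟩)

lemma le_muZ {c : ℤ} (hc : c ≤ m) (h : ∀ j, j ≠ i → c ≤ min (v j) (3 * m - v j)) :
    c ≤ muZ m i v :=
  (Finset.le_fold_min _).2 ⟨hc, fun j _ => by
    by_cases hj : j = i
    · simpa [fZ, hj] using hc
    · simpa [fZ, hj] using h j hj⟩

lemma muZ_cases : muZ m i v = m ∨ ∃ j, j ≠ i ∧ muZ m i v = min (v j) (3 * m - v j) := by
  rcases (Finset.fold_min_le _).1 (le_refl (muZ m i v)) with h | ⟨j, _, hj⟩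
  · exact Or.inl (le_antisymm muZ_le_base h)
  · by_cases hji : j = i
    · simp only [fZ, hji, if_pos rfl] at hj
      exact Or.inl (le_antisymm muZ_le_base hj)
    · simp only [fZ, if_neg hji] at hj
      exact Or.inr ⟨j, hji, le_antisymm (muZ_le hji) hj⟩

lemma muZ_nonneg (hm : 0 ≤ m) (hv : ∀ k, 0 ≤ v k ∧ v k ≤ 3 * m) : 0 ≤ muZ m i v :=
  le_muZ hm fun j _ => by have := hv j; omega

lemma muZ_congr
    (h : ∀ j, j ≠ i → (v j = w j ∨
      (m ≤ min (v j) (3 * m - v j) ∧ m ≤ min (w j) (3 * m - w j)))) :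
    muZ m i v = muZ m i w := by
  refine le_antisymm (le_muZ muZ_le_base fun j hj => ?_) (le_muZ muZ_le_base fun j hj => ?_)
  · rcases h j hj with he | ⟨_, h2⟩
    · rw [← he]; exact muZ_le hj
    · exact le_trans muZ_le_base h2
  · rcases h j hj with he | ⟨h1, _⟩
    · rw [he]; exact muZ_le hj
    · exact le_trans muZ_le_base h1

lemma muZ_step {k : Fin n} (hk : w k = v k + 1) (h : ∀ j, j ≠ k → v j = w j) :
    muZ m i w ≤ muZ m i v + 1 ∧ muZ m i v ≤ muZ m i w + 1 := by
  constructor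
  · rcases muZ_cases (m := m) (i := i) (v := v) with hc | ⟨j, hj, hc⟩
    · have := muZ_le_base (m := m) (i := i) (v := w); omega
    · have h2 : muZ m i w ≤ min (w j) (3 * m - w j) := muZ_le hj
      by_cases hjk : j = k
      · subst hjk; omega
      · have := h j hjk; omega
  · rcases muZ_cases (m := m) (i := i) (v := w) with hc | ⟨j, hj, hc⟩
    · have := muZ_le_base (m := m) (i := i) (v := v); omega
    · have h2 : muZ m i v ≤ min (v j) (3 * m - v j) := muZ_le hj
      by_cases hjk : j = k
      · subst hjk; omega
      · have := h j hjk; omega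

/-- The retraction `σ : I_{3m}^{□n} → ⊓(m; n, i, ε)`. -/
def sigZ (m : ℤ) {n : ℕ} (i : Fin n) (ε : ℤ) (v : Fin n → ℤ) : Fin n → ℤ :=
  fun k => if k = i then min (max (cmZ m (v i) + (1 - 2 * ε) * muZ m i v) 0) m
    else cmZ m (v k)

variable {ε : ℤ}

lemma sig_mem (hm : 1 ≤ m) (hε : ε = 0 ∨ ε = 1) (hv : ∀ k, 0 ≤ v k ∧ v k ≤ 3 * m) :
    inOpenBox m i ε (sigZ m i ε v) := by
  have hμ0 : 0 ≤ muZ m i v := muZ_nonneg (by omega) hv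
  have hμm : muZ m i v ≤ m := muZ_le_base
  constructor
  · intro k
    by_cases hk : k = i
    · simp only [sigZ, if_pos hk]; omega
    · simp only [sigZ, if_neg hk, cmZ]; have := hv k; omega
  · have hci0 : 0 ≤ cmZ m (v i) := by simp [cmZ]; omega
    have hcim : cmZ m (v i) ≤ m := by simp [cmZ]
    rcases hε with hε | hε <;> subst hε
    · by_cases h : m ≤ cmZ m (v i) + muZ m i v
      · refine ⟨i, 1, Or.inr rfl, by simp, ?_⟩
        simp only [sigZ]
        rw [if_pos trivial]
        omega
      · rcases muZ_cases (m := m) (i := i) (v := v) with hc | ⟨j, hj, hc⟩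
        · omega
        · have hvj := hv j
          by_cases hside : v j ≤ m
          · refine ⟨j, 0, Or.inl rfl, by simp [hj], ?_⟩
            simp only [sigZ, if_neg hj, cmZ]; omega
          · refine ⟨j, 1, Or.inr rfl, by simp [hj], ?_⟩
            simp only [sigZ, if_neg hj, cmZ]; omega
    · by_cases h : cmZ m (v i) ≤ muZ m i v
      · refine ⟨i, 0, Or.inl rfl, by norm_num, ?_⟩
        simp only [sigZ]
        rw [if_pos trivial]
        omega
      · rcases muZ_cases (m := m) (i := i) (v := v) with hc | ⟨j, hj, hc⟩
        · omega
        · have hvj := hv j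
          by_cases hside : v j ≤ m
          · refine ⟨j, 0, Or.inl rfl, by simp [hj], ?_⟩
            simp only [sigZ, if_neg hj, cmZ]; omega
          · refine ⟨j, 1, Or.inr rfl, by simp [hj], ?_⟩
            simp only [sigZ, if_neg hj, cmZ]; omega

lemma sig_fix (hm : 1 ≤ m) (hε : ε = 0 ∨ ε = 1) (hbox : inOpenBox (3 * m) i ε v) :
    sigZ m i ε v = fun k => cmZ m (v k) := by
  obtain ⟨hb, j, η, hη, hne, hj⟩ := hbox
  have hμ0 : 0 ≤ muZ m i v := muZ_nonneg (by omega) hb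
  have hμm : muZ m i v ≤ m := muZ_le_base
  funext k
  by_cases hk : k = i
  · rw [hk]
    simp only [sigZ, if_pos rfl]
    by_cases hji : j = i
    · have hvi : v i = η * (3 * m) := hji ▸ hj
      have hne' : ¬ (η = ε) := fun h => hne ⟨hji, h⟩
      rcases hη with h0 | h1 <;> rcases hε with he | he <;> subst_vars <;>
        first
          | exact absurd rfl hne'
          | (simp only [cmZ]; omega)
    · have hle : muZ m i v ≤ min (v j) (3 * m - v j) := muZ_le hji
      have hμz : muZ m i v = 0 := by rcases hη with h0 | h1 <;> subst_vars <;> omega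
      rw [hμz]
      rcases hε with he | he <;> subst he <;> (simp only [cmZ]; omega)
  · simp only [sigZ, if_neg hk]

lemma sig_adj (hm : 1 ≤ m) (hε : ε = 0 ∨ ε = 1)
    (hv : ∀ k, 0 ≤ v k ∧ v k ≤ 3 * m) (hw : ∀ k, 0 ≤ w k ∧ w k ≤ 3 * m)
    {k : Fin n} (hk : w k = v k + 1) (hrest : ∀ j, j ≠ k → v j = w j) :
    sigZ m i ε v = sigZ m i ε w ∨ boxAdjZ (sigZ m i ε v) (sigZ m i ε w) := by
  have he1 : (1 - 2 * ε) = 1 ∨ (1 - 2 * ε) = -1 := by rcases hε with h | h <;> subst h <;> norm_num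
  by_cases hki : k = i
  · -- only coordinate i moves
    subst hki
    have hμ : muZ m k v = muZ m k w := muZ_congr fun j hj => Or.inl (hrest j hj)
    have hc : cmZ m (w k) = cmZ m (v k) ∨ cmZ m (w k) = cmZ m (v k) + 1 := by
      simp only [cmZ]; omega
    set a := sigZ m k ε v with ha
    set b := sigZ m k ε w with hb
    have hrest' : ∀ j, j ≠ k → a j = b j := fun j hj => by
      simp only [ha, hb, sigZ, if_neg hj, hrest j hj]
    have hik : a k = min (max (cmZ m (v k) + (1 - 2 * ε) * muZ m k v) 0) m := by
      simp [ha, sigZ]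
    have hik' : b k = min (max (cmZ m (w k) + (1 - 2 * ε) * muZ m k v) 0) m := by
      simp [hb, sigZ, hμ]
    have : a k = b k ∨ a k + 1 = b k ∨ b k + 1 = a k := by
      rcases he1 with h | h <;> rw [h] at hik hik' <;> omega
    rcases this with h | h
    · refine Or.inl (funext fun j => ?_)
      by_cases hj : j = k
      · subst hj; exact h
      · exact hrest' j hj
    · exact Or.inr ⟨k, h, hrest'⟩
  · -- coordinate k ≠ i moves
    have hvi : v i = w i := hrest i (fun h => hki h.symm)
    set a := sigZ m i ε v with ha
    set b := sigZ m i ε w with hb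
    have hrest' : ∀ j, j ≠ k → j ≠ i → a j = b j := fun j hjk hji => by
      simp only [ha, hb, sigZ, if_neg hji, hrest j hjk]
    have hck : cmZ m (v k) = cmZ m (w k) ∨
        (cmZ m (w k) = cmZ m (v k) + 1 ∧ m ≤ v k ∧ v k ≤ 2 * m - 1) := by
      simp only [cmZ]; omega
    rcases hck with hck | ⟨hck, hlo, hhi⟩
    · -- c_k unchanged; only coordinate i may move
      have hak : a k = b k := by
        simp only [ha, hb, sigZ, if_neg hki]; exact hck
      have hμ := muZ_step (m := m) (i := i) hk hrest
      have hik : a i = min (max (cmZ m (v i) + (1 - 2 * ε) * muZ m i v) 0) m := by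
        simp [ha, sigZ]
      have hik' : b i = min (max (cmZ m (v i) + (1 - 2 * ε) * muZ m i w) 0) m := by
        simp [hb, sigZ, hvi]
      have : a i = b i ∨ a i + 1 = b i ∨ b i + 1 = a i := by
        rcases he1 with h | h <;> rw [h] at hik hik' <;> omega
      rcases this with h | h
      · refine Or.inl (funext fun j => ?_)
        by_cases hj1 : j = i
        · subst hj1; exact h
        · by_cases hj2 : j = k
          · subst hj2; exact hak
          · exact hrest' j hj2 hj1
      · exact Or.inr ⟨i, h, fun j hj => by
          by_cases hj2 : j = k
          · subst hj2; exact hak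
          · exact hrest' j hj2 hj⟩
    · -- c_k changes; μ is unchanged
      have hμ : muZ m i v = muZ m i w := by
        refine muZ_congr fun j hj => ?_
        by_cases hjk : j = k
        · subst hjk; right; constructor <;> omega
        · exact Or.inl (hrest j hjk)
      have hai : a i = b i := by
        simp only [ha, hb, sigZ, if_pos rfl, hvi, hμ]
      have hakbk : a k + 1 = b k := by
        simp only [ha, hb, sigZ, if_neg hki]; omega
      refine Or.inr ⟨k, Or.inl hakbk, fun j hj => ?_⟩
      by_cases hj1 : j = i
      · subst hj1; exact hai
      · exact hrest' j hj hj1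

end OBF

/-- Open-box filling theorem for graphs: every graph map `g : ⊓(m; n, i, ε) → G` admits a
graph map `h : I_{3m}^{□n} → G` with `h(v) = g(c^m(v_1), …, c^m(v_n))` for every vertex `v`
of the open box `⊓(3m; n, i, ε) ⊆ I_{3m}^{□n}`. -/
theorem open_box_filling {V : Type*} (G : SimpleGraph V) (m n : ℕ) (hm : 1 ≤ m)
    (hn : 1 ≤ n) (i : Fin n) (ε : ℤ) (hε : ε = 0 ∨ ε = 1)
    (g : (Fin n → ℤ) → V)
    (hg : ∀ v w : Fin n → ℤ, inOpenBox (m : ℤ) i ε v → inOpenBox (m : ℤ) i ε w →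
      boxAdjZ v w → g v = g w ∨ G.Adj (g v) (g w)) :
    ∃ h : (Fin n → ℤ) → V,
      (∀ v w : Fin n → ℤ,
        (∀ k, 0 ≤ v k ∧ v k ≤ 3 * (m : ℤ)) → (∀ k, 0 ≤ w k ∧ w k ≤ 3 * (m : ℤ)) →
        boxAdjZ v w → h v = h w ∨ G.Adj (h v) (h w)) ∧
      (∀ v : Fin n → ℤ, inOpenBox (3 * (m : ℤ)) i ε v →
        h v = g (fun k => cmZ (m : ℤ) (v k))) := by
  have hm' : (1 : ℤ) ≤ (m : ℤ) := by exact_mod_cast hm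
  refine ⟨fun v => g (OBF.sigZ (m : ℤ) i ε v), ?_, ?_⟩
  · have claim : ∀ v w : Fin n → ℤ,
        (∀ k, 0 ≤ v k ∧ v k ≤ 3 * (m : ℤ)) → (∀ k, 0 ≤ w k ∧ w k ≤ 3 * (m : ℤ)) →
        (∃ k, w k = v k + 1 ∧ ∀ j, j ≠ k → v j = w j) →
        g (OBF.sigZ (m : ℤ) i ε v) = g (OBF.sigZ (m : ℤ) i ε w) ∨
          G.Adj (g (OBF.sigZ (m : ℤ) i ε v)) (g (OBF.sigZ (m : ℤ) i ε w)) := by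
      intro v w hv hw ⟨k, hk, hrest⟩
      rcases OBF.sig_adj hm' hε hv hw hk hrest with he | hadj
      · exact Or.inl (congrArg g he)
      · exact hg _ _ (OBF.sig_mem hm' hε hv) (OBF.sig_mem hm' hε hw) hadj
    intro v w hv hw ⟨k, hor, hrest⟩
    rcases hor with h1 | h2
    · exact claim v w hv hw ⟨k, h1.symm, hrest⟩
    · exact (claim w v hw hv ⟨k, h2.symm, fun j hj => (hrest j hj).symm⟩).imp
        Eq.symm (fun hadj => hadj.symm)
  · intro v hbox
    exact congrArg g (OBF.sig_fix hm' hε hbox)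
end

section
/- Existence of concatenation squares: let G be a graph, M, N ≥ 0, and let f : I_M → G and g : I_N → G be graph maps with f(M) = g(0). Define f·g : I_{M+N} → G by (f·g)(t) = f(t) for t ≤ M and (f·g)(t) = g(t−M) for t ≥ M. Then the function η : I_{M+N} □ I_{M+N} → G defined by η(x,y) = f(max(x, min(y, M))) for x ≤ M and η(x,y) = g(x − M) for x ≥ M is a well-defined graph map, and it satisfies: η(x, 0) = (f·g)(x) for all x; η(0, y) = f(min(y, M)) for all y; η(M+N, y) = g(N) for all y; and η(x, M+N) = g(max(x − M, 0)) for all x. -/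
/-- The concatenation `f·g : I_{M+N} → G` of paths `f : I_M → G` and `g : I_N → G`
(with vertices of intervals encoded as integers). -/
def concPath {V : Type*} (M : ℕ) (f g : ℤ → V) : ℤ → V :=
  fun t => if t ≤ (M : ℤ) then f t else g (t - M)

/-- The concatenation square `η : I_{M+N} □ I_{M+N} → G`:
`η(x,y) = f(max(x, min(y, M)))` for `x ≤ M` and `η(x,y) = g(x − M)` for `x ≥ M`. -/
def concSquare {V : Type*} (M : ℕ) (f g : ℤ → V) : ℤ → ℤ → V :=
  fun x y => if x ≤ (M : ℤ) then f (max x (min y (M : ℤ))) else g (x - M)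

/-- Existence of concatenation squares: if `f : I_M → G` and `g : I_N → G` are graph maps
with `f(M) = g(0)`, then `η` is a well-defined graph map `I_{M+N} □ I_{M+N} → G`
satisfying `η(x,0) = (f·g)(x)`, `η(0,y) = f(min(y,M))`, `η(M+N,y) = g(N)` and
`η(x,M+N) = g(max(x−M,0))`. -/
theorem concatenation_square {V : Type*} (G : SimpleGraph V) (M N : ℕ) (f g : ℤ → V)
    (hf : ∀ x y : ℤ, 0 ≤ x → x ≤ (M : ℤ) → 0 ≤ y → y ≤ (M : ℤ) →
      (x + 1 = y ∨ y + 1 = x) → f x = f y ∨ G.Adj (f x) (f y))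
    (hg : ∀ x y : ℤ, 0 ≤ x → x ≤ (N : ℤ) → 0 ≤ y → y ≤ (N : ℤ) →
      (x + 1 = y ∨ y + 1 = x) → g x = g y ∨ G.Adj (g x) (g y))
    (hfg : f (M : ℤ) = g 0) :
    -- well-definedness: at the overlap `x = M` the two defining clauses agree
    (∀ y : ℤ, 0 ≤ y → y ≤ (M : ℤ) + N →
      concSquare M f g (M : ℤ) y = g ((M : ℤ) - M)) ∧
    -- η is a graph map on I_{M+N} □ I_{M+N}
    (∀ x y x' y' : ℤ,
      0 ≤ x → x ≤ (M : ℤ) + N → 0 ≤ y → y ≤ (M : ℤ) + N →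
      0 ≤ x' → x' ≤ (M : ℤ) + N → 0 ≤ y' → y' ≤ (M : ℤ) + N →
      ((x = x' ∧ (y + 1 = y' ∨ y' + 1 = y)) ∨ (y = y' ∧ (x + 1 = x' ∨ x' + 1 = x))) →
      concSquare M f g x y = concSquare M f g x' y' ∨
        G.Adj (concSquare M f g x y) (concSquare M f g x' y')) ∧
    -- boundary equations
    (∀ x : ℤ, 0 ≤ x → x ≤ (M : ℤ) + N → concSquare M f g x 0 = concPath M f g x) ∧
    (∀ y : ℤ, 0 ≤ y → y ≤ (M : ℤ) + N → concSquare M f g 0 y = f (min y (M : ℤ))) ∧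
    (∀ y : ℤ, 0 ≤ y → y ≤ (M : ℤ) + N → concSquare M f g ((M : ℤ) + N) y = g (N : ℤ)) ∧
    (∀ x : ℤ, 0 ≤ x → x ≤ (M : ℤ) + N →
      concSquare M f g x ((M : ℤ) + N) = g (max (x - M) 0)) := by

  have hf' : ∀ a a' : ℤ, 0 ≤ a → a ≤ (M : ℤ) → 0 ≤ a' → a' ≤ (M : ℤ) →
      (a = a' ∨ a + 1 = a' ∨ a' + 1 = a) → f a = f a' ∨ G.Adj (f a) (f a') := by
    rintro a a' h1 h2 h3 h4 (rfl | h | h)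
    · exact Or.inl rfl
    · exact hf a a' h1 h2 h3 h4 (Or.inl h)
    · exact hf a a' h1 h2 h3 h4 (Or.inr h)
  have hg' : ∀ a a' : ℤ, 0 ≤ a → a ≤ (N : ℤ) → 0 ≤ a' → a' ≤ (N : ℤ) →
      (a = a' ∨ a + 1 = a' ∨ a' + 1 = a) → g a = g a' ∨ G.Adj (g a) (g a') := by
    rintro a a' h1 h2 h3 h4 (rfl | h | h)
    · exact Or.inl rfl
    · exact hg a a' h1 h2 h3 h4 (Or.inl h)
    · exact hg a a' h1 h2 h3 h4 (Or.inr h)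
  refine ⟨?_, ?_, ?_, ?_, ?_, ?_⟩
  · intro y hy0 hy1
    simp only [concSquare]
    rw [if_pos le_rfl, show max (M : ℤ) (min y (M : ℤ)) = (M : ℤ) by omega, hfg]
    congr 1
    omega
  · intro x y x' y' hx0 hx1 hy0 hy1 hx'0 hx'1 hy'0 hy'1 h
    simp only [concSquare]
    split_ifs with h1 h2 h2
    · exact hf' _ _ (by omega) (by omega) (by omega) (by omega) (by omega)
    · rw [show max x (min y (M : ℤ)) = (M : ℤ) by omega, hfg,
        show x' - (M : ℤ) = 1 by omega]
      exact hg' 0 1 le_rfl (by omega) (by omega) (by omega) (by omega)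
    · rw [show max x' (min y' (M : ℤ)) = (M : ℤ) by omega, hfg,
        show x - (M : ℤ) = 1 by omega]
      exact hg' 1 0 (by omega) (by omega) le_rfl (by omega) (by omega)
    · exact hg' _ _ (by omega) (by omega) (by omega) (by omega) (by omega)
  · intro x hx0 hx1
    simp only [concSquare, concPath]
    split_ifs with h
    · congr 1
      omega
    · rfl
  · intro y hy0 hy1
    simp only [concSquare]
    rw [if_pos (by omega : (0 : ℤ) ≤ (M : ℤ))]
    congr 1
    omega
  · intro y hy0 hy1
    simp only [concSquare]
    split_ifs with h
    · rw [show max ((M : ℤ) + N) (min y (M : ℤ)) = (M : ℤ) by omega, hfg]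
      congr 1
      omega
    · congr 1
      omega
  · intro x hx0 hx1
    simp only [concSquare]
    split_ifs with h
    · rw [show max x (min ((M : ℤ) + N) (M : ℤ)) = (M : ℤ) by omega, hfg]
      congr 1
      omega
    · congr 1
      omega
end

section
/- Inner faces of the subdivision maps: let m ≥ 1, n ≥ 2, j ∈ {0,…,n−1}, ε ∈ {0,1}, and i ∈ {1,…,n} with i ≠ j+1. If 1 ≤ i ≤ j, then L̄^n_{m,j} ∘ ∂_{i,ε} = ∂_{i,ε} ∘ L̄^{n−1}_{m,j−1} and R̄^n_{m,j} ∘ ∂_{i,ε} = ∂_{i,ε} ∘ R̄^{n−1}_{m,j−1}, where on the right ∂_{i,ε} denotes the map inserting ε·(m+1) as the i-th coordinate of the codomain. If j+1 < i ≤ n (so j ≤ n−2), then L̄^n_{m,j} ∘ ∂_{i,ε} = ι ∘ L̄^{n−1}_{m,j} and R̄^n_{m,j} ∘ ∂_{i,ε} = ι ∘ R̄^{n−1}_{m,j}, where ι is the graph map inserting ε·m as the i-th coordinate. In particular, for every i ∈ {1,…,n} with i ≠ j+1, the composites L̄^n_{m,j} ∘ ∂_{i,ε} and R̄^n_{m,j}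 ∘ ∂_{i,ε} factor through L̄^{n−1} and R̄^{n−1} maps respectively. -/
/-- The map `l : I_{m+1} → I_m`, `l(0) = 0` and `l(v) = v − 1` for `v ≥ 1`
(vertices of intervals encoded as integers). -/
def lmap (v : ℤ) : ℤ := max (v - 1) 0

/-- The map `r : I_{m+1} → I_m`, `r(v) = v` for `v ≤ m` and `r(m+1) = m`. -/
def rmap (m v : ℤ) : ℤ := min v m

/-- The subdivision map `L̄^n_{m,j} : I_{m+1}^{□(n+1)} → I_{m+1}^{□(j+1)} □ I_m^{□(n−j−1)}`
(0-indexed coordinates): if `v_{n+1} ≤ m` it applies `l` to all coordinates past the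
first `j`, and if `v_{n+1} = m + 1` it applies `l` to all coordinates past the first `j+1`. -/
def Lbar (m : ℕ) {n : ℕ} (j : ℕ) (v : Fin (n + 1) → ℤ) : Fin n → ℤ := fun k =>
  if v (Fin.last n) ≤ (m : ℤ) then
    (if (k : ℕ) < j then v k.castSucc else lmap (v k.castSucc))
  else
    (if (k : ℕ) < j + 1 then v k.castSucc else lmap (v k.castSucc))

/-- The subdivision map `R̄^n_{m,j} : I_{m+1}^{□(n+1)} → I_{m+1}^{□(j+1)} □ I_m^{□(n−j−1)}`:
if `v_{n+1} = 0` it applies `r` to all coordinates past the first `j`, and if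
`v_{n+1} ≥ 1` it applies `r` to all coordinates past the first `j+1`. -/
def Rbar (m : ℕ) {n : ℕ} (j : ℕ) (v : Fin (n + 1) → ℤ) : Fin n → ℤ := fun k =>
  if v (Fin.last n) = 0 then
    (if (k : ℕ) < j then v k.castSucc else rmap (m : ℤ) (v k.castSucc))
  else
    (if (k : ℕ) < j + 1 then v k.castSucc else rmap (m : ℤ) (v k.castSucc))

lemma insertNth_eq_dite {q : ℕ} (s : Fin (q+1)) (x : ℤ) (v : Fin q → ℤ) (k : Fin (q+1)) :
    Fin.insertNth (α := fun _ => ℤ) s x v k =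
      if h : (k : ℕ) < (s : ℕ) then v ⟨k, by omega⟩
      else if h2 : (k : ℕ) = (s : ℕ) then x
      else v ⟨(k : ℕ) - 1, by omega⟩ := by
  rcases eq_or_ne k s with rfl | hk
  · simp
  · obtain ⟨j, rfl⟩ := Fin.exists_succAbove_eq hk
    rw [Fin.insertNth_apply_succAbove]
    rcases lt_or_ge j.castSucc s with h | h
    · rw [Fin.succAbove_of_castSucc_lt _ _ h]
      have : (j.castSucc : ℕ) < (s : ℕ) := h
      rw [dif_pos this]
      congr 1
    · rw [Fin.succAbove_of_le_castSucc _ _ h]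
      have h1 : ¬ ((j.succ : ℕ) < (s : ℕ)) := by
        simp only [Fin.val_succ]; have := Fin.le_iff_val_le_val.mp h; simp at this; omega
      have h2 : ¬ ((j.succ : ℕ) = (s : ℕ)) := by
        simp only [Fin.val_succ]; have := Fin.le_iff_val_le_val.mp h; simp at this; omega
      rw [dif_neg h1, dif_neg h2]
      congr 1

lemma lmap_eps (m : ℕ) {ε : ℤ} (hε : ε = 0 ∨ ε = 1) : lmap (ε * ((m : ℤ) + 1)) = ε * m := by
  rcases hε with rfl | rfl <;> simp [lmap]

lemma rmap_eps (m : ℕ) {ε : ℤ} (hε : ε = 0 ∨ ε = 1) :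
    rmap (m : ℤ) (ε * ((m : ℤ) + 1)) = ε * m := by
  rcases hε with rfl | rfl <;> simp [rmap]


set_option maxHeartbeats 1600000 in
/-- Inner faces of the subdivision maps (writing `n = p + 1 ≥ 2`): for `i ∈ {1,…,n}`,
`i ≠ j + 1` (with `i` 1-indexed, and `∂_{i,ε}` inserting `ε·(m+1)` as the `i`-th
coordinate), if `i ≤ j` then `L̄^n_{m,j} ∘ ∂_{i,ε} = ∂_{i,ε} ∘ L̄^{n−1}_{m,j−1}` and
similarly for `R̄`; if `j + 1 < i` then `L̄^n_{m,j} ∘ ∂_{i,ε} = ι ∘ L̄^{n−1}_{m,j}` and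
similarly for `R̄`, where `ι` inserts `ε·m` as the `i`-th coordinate. -/
theorem subdivision_inner_faces (m p : ℕ) (hm : 1 ≤ m) (hp : 1 ≤ p) (j : ℕ) (hj : j ≤ p)
    (ε : ℤ) (hε : ε = 0 ∨ ε = 1)
    (i : ℕ) (hi1 : 1 ≤ i) (hi2 : i ≤ p + 1) (hij : i ≠ j + 1) :
    (i ≤ j →
      ∀ v : Fin (p + 1) → ℤ, (∀ k, 0 ≤ v k ∧ v k ≤ (m : ℤ) + 1) →
        Lbar m j ((⟨i - 1, by omega⟩ : Fin (p + 2)).insertNth (ε * ((m : ℤ) + 1)) v) =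
            (⟨i - 1, by omega⟩ : Fin (p + 1)).insertNth (ε * ((m : ℤ) + 1))
              (Lbar m (j - 1) v) ∧
          Rbar m j ((⟨i - 1, by omega⟩ : Fin (p + 2)).insertNth (ε * ((m : ℤ) + 1)) v) =
            (⟨i - 1, by omega⟩ : Fin (p + 1)).insertNth (ε * ((m : ℤ) + 1))
              (Rbar m (j - 1) v)) ∧
    (j + 1 < i →
      ∀ v : Fin (p + 1) → ℤ, (∀ k, 0 ≤ v k ∧ v k ≤ (m : ℤ) + 1) →
        Lbar m j ((⟨i - 1, by omega⟩ : Fin (p + 2)).insertNth (ε * ((m : ℤ) + 1)) v) =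
            (⟨i - 1, by omega⟩ : Fin (p + 1)).insertNth (ε * (m : ℤ)) (Lbar m j v) ∧
          Rbar m j ((⟨i - 1, by omega⟩ : Fin (p + 2)).insertNth (ε * ((m : ℤ) + 1)) v) =
            (⟨i - 1, by omega⟩ : Fin (p + 1)).insertNth (ε * (m : ℤ)) (Rbar m j v)) := by
  have key : ∀ v : Fin (p + 1) → ℤ,
      ∀ x : ℤ, Fin.insertNth (α := fun _ => ℤ) (⟨i - 1, by omega⟩ : Fin (p + 2)) x v
        (Fin.last (p + 1)) = v (Fin.last p) := by
    intro v x
    rw [insertNth_eq_dite]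
    rw [dif_neg (by simp; omega), dif_neg (by simp; omega)]
    exact congrArg v (Fin.ext (by simp))
  constructor
  · intro hle v hv
    constructor
    · funext k
      simp only [Lbar, key, insertNth_eq_dite, Fin.coe_castSucc, Fin.val_last,
        Fin.castSucc_mk]
      split_ifs <;> first
        | rfl
        | omega
        | (exact lmap_eps m hε)
    · funext k
      simp only [Rbar, key, insertNth_eq_dite, Fin.coe_castSucc, Fin.val_last,
        Fin.castSucc_mk]
      split_ifs <;> first
        | rfl
        | omega
        | (exact rmap_eps m hε)
  · intro hlt v hv
    constructor
    · funext k
      simp only [Lbar, key, insertNth_eq_dite, Fin.coe_castSucc, Fin.val_last,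
        Fin.castSucc_mk]
      split_ifs <;> first
        | rfl
        | omega
        | (exact lmap_eps m hε)
    · funext k
      simp only [Rbar, key, insertNth_eq_dite, Fin.coe_castSucc, Fin.val_last,
        Fin.castSucc_mk]
      split_ifs <;> first
        | rfl
        | omega
        | (exact rmap_eps m hε)
end

section
/- Outer faces of the subdivision maps: let m ≥ 1, n ≥ 1, j ∈ {0,…,n−1}, and η ∈ {0,1}. Then the composites L̄^n_{m,j} ∘ ∂_{j+1,η} and R̄^n_{m,j} ∘ ∂_{j+1,η} factor through the map collapsing the last n−j coordinates: there exist graph maps ψ, ψ′ : I_{m+1}^{□j} □ I_m^{□(n−j)} → I_{m+1}^{□(j+1)} □ I_m^{□(n−j−1)} such that L̄^n_{m,j} ∘ ∂_{j+1,η} = ψ ∘ (id^{□j} □ l^{□(n−j)}) and R̄^n_{m,j} ∘ ∂_{j+1,η} = ψ′ ∘ (id^{□j} □ r^{□(n−j)}), where (id^{□j} □ l^{□(n−j)})(v_1,…,v_n) = (v_1,…,v_j, l(v_{j+1}),…, l(v_n)) and similarly for r. -/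
/-- Membership in a mixed box with per-coordinate upper bounds `bd`. -/
def inBoxB {n : ℕ} (bd : Fin n → ℤ) (v : Fin n → ℤ) : Prop :=
  ∀ k, 0 ≤ v k ∧ v k ≤ bd k

/-- A graph map between mixed boxes, encoded over `ℤ`: vertices of the box are mapped into
the target box, and adjacent vertices go to equal or adjacent vertices. -/
def IsBoxMapZ {n n' : ℕ} (bd : Fin n → ℤ) (bd' : Fin n' → ℤ)
    (ψ : (Fin n → ℤ) → Fin n' → ℤ) : Prop :=
  (∀ v, inBoxB bd v → inBoxB bd' (ψ v)) ∧
    (∀ v w, inBoxB bd v → inBoxB bd w → boxAdjZ v w →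
      ψ v = ψ w ∨ boxAdjZ (ψ v) (ψ w))

lemma insertNth_eval {n j : ℕ} (hj : j < n + 1) (x : ℤ) (v : Fin n → ℤ) (i : Fin (n + 1)) :
    (Fin.insertNth (α := fun _ => ℤ) (⟨j, hj⟩ : Fin (n + 1)) x v) i =
      if h : (i : ℕ) < j then v ⟨i, by omega⟩
      else if h2 : (i : ℕ) = j then x
      else v ⟨(i : ℕ) - 1, by have := i.isLt; omega⟩ := by
  rcases Nat.lt_trichotomy (i : ℕ) j with h | h | h
  · rw [dif_pos h]
    have hlt : (i : ℕ) < n := by omega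
    have : i = (⟨j, hj⟩ : Fin (n + 1)).succAbove ⟨(i : ℕ), hlt⟩ := by
      rw [Fin.succAbove_of_castSucc_lt]
      · exact (Fin.ext rfl)
      · simpa [Fin.lt_def] using h
    conv_lhs => rw [this]
    rw [Fin.insertNth_apply_succAbove]
  · rw [dif_neg (by omega), dif_pos h]
    have : i = (⟨j, hj⟩ : Fin (n + 1)) := Fin.ext h
    conv_lhs => rw [this]
    rw [Fin.insertNth_apply_same]
  · rw [dif_neg (by omega), dif_neg (by omega)]
    have hlt : (i : ℕ) - 1 < n := by have := i.isLt; omega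
    have : i = (⟨j, hj⟩ : Fin (n + 1)).succAbove ⟨(i : ℕ) - 1, hlt⟩ := by
      rw [Fin.succAbove_of_le_castSucc]
      · exact Fin.ext (by simp; omega)
      · simp [Fin.le_def]; omega
    conv_lhs => rw [this]
    rw [Fin.insertNth_apply_succAbove]

def psiAux (n j : ℕ) (hn : 1 ≤ n) (c : ℤ → ℤ) (u : Fin n → ℤ) : Fin n → ℤ := fun k =>
  if (k : ℕ) < j then u k
  else if (k : ℕ) = j then c (u ⟨n - 1, by omega⟩)
  else u ⟨(k : ℕ) - 1, by have := k.isLt; omega⟩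

lemma psiAux_eval_lt {n j : ℕ} (hn : 1 ≤ n) (c : ℤ → ℤ) (u : Fin n → ℤ) (k : Fin n)
    (h : (k : ℕ) < j) : psiAux n j hn c u k = u k := by
  unfold psiAux; rw [if_pos h]

lemma psiAux_eval_eq {n j : ℕ} (hn : 1 ≤ n) (c : ℤ → ℤ) (u : Fin n → ℤ) (k : Fin n)
    (h : (k : ℕ) = j) : psiAux n j hn c u k = c (u ⟨n - 1, by omega⟩) := by
  unfold psiAux; rw [if_neg (by omega), if_pos h]

lemma psiAux_eval_gt {n j : ℕ} (hn : 1 ≤ n) (c : ℤ → ℤ) (u : Fin n → ℤ) (k : Fin n)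
    (h : j < (k : ℕ)) :
    psiAux n j hn c u k = u ⟨(k : ℕ) - 1, by have := k.isLt; omega⟩ := by
  unfold psiAux; rw [if_neg (by omega), if_neg (by omega)]

lemma psiAux_isBoxMap (m n j : ℕ) (hm : 1 ≤ m) (hn : 1 ≤ n) (hj : j ≤ n - 1)
    (c : ℤ → ℤ) (hc1 : ∀ a, 0 ≤ a → a ≤ (m : ℤ) → 0 ≤ c a ∧ c a ≤ (m : ℤ) + 1)
    (hc2 : ∀ a b, (a + 1 = b ∨ b + 1 = a) → c a = c b ∨ (c a + 1 = c b ∨ c b + 1 = c a)) :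
    IsBoxMapZ (fun k => if (k : ℕ) < j then (m : ℤ) + 1 else (m : ℤ))
      (fun k => if (k : ℕ) < j + 1 then (m : ℤ) + 1 else (m : ℤ)) (psiAux n j hn c) := by
  have hjn : j < n := by omega
  have hbd : ∀ u : Fin n → ℤ, inBoxB (fun k => if (k : ℕ) < j then (m : ℤ) + 1 else (m : ℤ)) u →
      ∀ k : Fin n, (0 ≤ u k ∧ u k ≤ (m : ℤ) + 1) ∧ ((k : ℕ) ≥ j → u k ≤ (m : ℤ)) := by
    intro u hu k
    have h := hu k
    simp only at h
    constructor
    · split_ifs at h with h'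
      · exact h
      · exact ⟨h.1, by omega⟩
    · intro hk
      rw [if_neg (by omega)] at h
      exact h.2
  constructor
  · intro u hu k
    simp only
    rcases Nat.lt_trichotomy (k : ℕ) j with h | h | h
    · rw [psiAux_eval_lt hn c u k h, if_pos (by omega)]
      exact (hbd u hu k).1
    · rw [psiAux_eval_eq hn c u k h, if_pos (by omega)]
      exact hc1 _ ((hbd u hu _).1).1 ((hbd u hu ⟨n - 1, by omega⟩).2 (by simp; omega))
    · rw [psiAux_eval_gt hn c u k h, if_neg (by omega)]
      have := k.isLt
      exact ⟨((hbd u hu _).1).1, (hbd u hu ⟨(k : ℕ) - 1, by omega⟩).2 (by simp; omega)⟩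
  · intro u w hu hw ⟨i, hi1, hi2⟩
    have hin := i.isLt
    have hne : ∀ (a : ℕ) (ha : a < n), a ≠ (i : ℕ) → u ⟨a, ha⟩ = w ⟨a, ha⟩ := by
      intro a ha hain
      exact hi2 ⟨a, ha⟩ (fun he => hain (congrArg Fin.val he))
    by_cases hilast : (i : ℕ) = n - 1
    · -- only slot j can change
      have hcu : u ⟨n - 1, by omega⟩ + 1 = w ⟨n - 1, by omega⟩ ∨
          w ⟨n - 1, by omega⟩ + 1 = u ⟨n - 1, by omega⟩ := by
        have : i = (⟨n - 1, by omega⟩ : Fin n) := Fin.ext hilast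
        rw [← this]; exact hi1
      have heq : ∀ k : Fin n, (k : ℕ) ≠ j → psiAux n j hn c u k = psiAux n j hn c w k := by
        intro k hk
        have hkn := k.isLt
        rcases Nat.lt_trichotomy (k : ℕ) j with h | h | h
        · rw [psiAux_eval_lt hn c u k h, psiAux_eval_lt hn c w k h]
          exact hi2 k (by intro he; rw [he] at h; omega)
        · exact absurd h hk
        · rw [psiAux_eval_gt hn c u k h, psiAux_eval_gt hn c w k h]
          exact hne _ _ (by omega)
      rcases hc2 _ _ hcu with hce | hcadj
      · left
        funext k
        by_cases hk : (k : ℕ) = j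
        · rw [psiAux_eval_eq hn c u k hk, psiAux_eval_eq hn c w k hk, hce]
        · exact heq k hk
      · right
        refine ⟨⟨j, hjn⟩, ?_, fun k hk => heq k (fun he => hk (Fin.ext he))⟩
        rw [psiAux_eval_eq hn c u ⟨j, hjn⟩ rfl, psiAux_eval_eq hn c w ⟨j, hjn⟩ rfl]
        exact hcadj
    · -- the j slot is unchanged
      have hceq : ∀ k : Fin n, (k : ℕ) = j → psiAux n j hn c u k = psiAux n j hn c w k := by
        intro k hk
        rw [psiAux_eval_eq hn c u k hk, psiAux_eval_eq hn c w k hk]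
        congr 1
        exact hne _ _ (by omega)
      right
      by_cases hij : (i : ℕ) < j
      · refine ⟨i, ?_, ?_⟩
        · rw [psiAux_eval_lt hn c u i hij, psiAux_eval_lt hn c w i hij]
          exact hi1
        · intro k hk
          have hkn := k.isLt
          rcases Nat.lt_trichotomy (k : ℕ) j with h | h | h
          · rw [psiAux_eval_lt hn c u k h, psiAux_eval_lt hn c w k h]
            exact hi2 k hk
          · exact hceq k h
          · rw [psiAux_eval_gt hn c u k h, psiAux_eval_gt hn c w k h]
            exact hne _ _ (by omega)
      · -- i ≥ j, i < n - 1, witness i + 1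
        refine ⟨⟨(i : ℕ) + 1, by omega⟩, ?_, ?_⟩
        · have hi1n : (i : ℕ) + 1 < n := by omega
          have hgt : j < ((⟨(i : ℕ) + 1, hi1n⟩ : Fin n) : ℕ) := by
            simp only [Fin.val_mk]; omega
          have e1 := psiAux_eval_gt hn c u ⟨(i : ℕ) + 1, hi1n⟩ hgt
          have e2 := psiAux_eval_gt hn c w ⟨(i : ℕ) + 1, hi1n⟩ hgt
          rw [e1, e2]
          have hieq : ∀ (h : ((⟨(i : ℕ) + 1, hi1n⟩ : Fin n) : ℕ) - 1 < n),
              (⟨((⟨(i : ℕ) + 1, hi1n⟩ : Fin n) : ℕ) - 1, h⟩ : Fin n) = i :=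
            fun h => Fin.ext (by simp)
          rw [hieq]
          exact hi1
        · intro k hk
          have hkn := k.isLt
          have hkne : (k : ℕ) ≠ (i : ℕ) + 1 := fun he => hk (Fin.ext he)
          rcases Nat.lt_trichotomy (k : ℕ) j with h | h | h
          · rw [psiAux_eval_lt hn c u k h, psiAux_eval_lt hn c w k h]
            exact hi2 k (by intro he; rw [he] at h; omega)
          · exact hceq k h
          · rw [psiAux_eval_gt hn c u k h, psiAux_eval_gt hn c w k h]
            exact hne _ _ (by omega)

def cLfun (eta mz a : ℤ) : ℤ := eta * (if a ≤ mz - 1 then mz else mz + 1)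

def cRfun (eta mz a : ℤ) : ℤ := eta * (if a = 0 then mz else mz + 1)

set_option maxHeartbeats 1000000 in
/-- Outer faces of the subdivision maps: the composites `L̄^n_{m,j} ∘ ∂_{j+1,η}` and
`R̄^n_{m,j} ∘ ∂_{j+1,η}` factor through `id^{□j} □ l^{□(n−j)}` and `id^{□j} □ r^{□(n−j)}`
respectively, via graph maps `ψ, ψ' : I_{m+1}^{□j} □ I_m^{□(n−j)} → I_{m+1}^{□(j+1)} □ I_m^{□(n−j−1)}`. -/
theorem subdivision_outer_faces (m n : ℕ) (hm : 1 ≤ m) (hn : 1 ≤ n) (j : ℕ)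
    (hj : j ≤ n - 1) (η : ℤ) (hη : η = 0 ∨ η = 1) :
    (∃ ψ : (Fin n → ℤ) → Fin n → ℤ,
      IsBoxMapZ (fun k => if (k : ℕ) < j then (m : ℤ) + 1 else (m : ℤ))
        (fun k => if (k : ℕ) < j + 1 then (m : ℤ) + 1 else (m : ℤ)) ψ ∧
      ∀ v : Fin n → ℤ, (∀ k, 0 ≤ v k ∧ v k ≤ (m : ℤ) + 1) →
        Lbar m j ((⟨j, by omega⟩ : Fin (n + 1)).insertNth (η * ((m : ℤ) + 1)) v) =
          ψ (fun k => if (k : ℕ) < j then v k else lmap (v k))) ∧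
    (∃ ψ' : (Fin n → ℤ) → Fin n → ℤ,
      IsBoxMapZ (fun k => if (k : ℕ) < j then (m : ℤ) + 1 else (m : ℤ))
        (fun k => if (k : ℕ) < j + 1 then (m : ℤ) + 1 else (m : ℤ)) ψ' ∧
      ∀ v : Fin n → ℤ, (∀ k, 0 ≤ v k ∧ v k ≤ (m : ℤ) + 1) →
        Rbar m j ((⟨j, by omega⟩ : Fin (n + 1)).insertNth (η * ((m : ℤ) + 1)) v) =
          ψ' (fun k => if (k : ℕ) < j then v k else rmap (m : ℤ) (v k))) := by
  have hjn : j < n := by omega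
  have hn1 : n - 1 < n := by omega
  refine ⟨?_, ?_⟩
  · refine ⟨psiAux n j hn (cLfun η (m : ℤ)), psiAux_isBoxMap m n j hm hn hj _ ?_ ?_, ?_⟩
    · intro a h1 h2
      unfold cLfun
      rcases hη with he | he <;> subst he <;> split_ifs <;> constructor <;> simp <;> omega
    · intro a b hab
      unfold cLfun
      rcases hη with he | he <;> subst he <;> split_ifs <;> simp <;> omega
    · intro v hv
      funext k
      have hkn := k.isLt
      set w := Fin.insertNth (α := fun _ => ℤ) (⟨j, by omega⟩ : Fin (n + 1))
        (η * ((m : ℤ) + 1)) v with hw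
      set u : Fin n → ℤ := fun k : Fin n => if (k : ℕ) < j then v k else lmap (v k) with hu
      clear_value w u
      have hu_lt : ∀ k' : Fin n, (k' : ℕ) < j → u k' = v k' := by
        intro k' hk'
        simp only [hu]
        rw [if_pos hk']
      have hu_ge : ∀ k' : Fin n, j ≤ (k' : ℕ) → u k' = lmap (v k') := by
        intro k' hk'
        simp only [hu]
        rw [if_neg (by omega)]
      have hlast : w (Fin.last n) = v ⟨n - 1, hn1⟩ := by
        rw [hw, insertNth_eval]
        rw [dif_neg (by simp [Fin.val_last]; omega), dif_neg (by simp [Fin.val_last]; omega)]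
        exact congrArg v (Fin.ext (by simp [Fin.val_last]))
      have hcs : ∀ k' : Fin n, w k'.castSucc =
          if (k' : ℕ) < j then v k'
          else if (k' : ℕ) = j then η * ((m : ℤ) + 1)
          else v ⟨(k' : ℕ) - 1, by have := k'.isLt; omega⟩ := by
        intro k'
        rw [hw, insertNth_eval]
        simp only [Fin.coe_castSucc]
        rcases Nat.lt_trichotomy (k' : ℕ) j with h | h | h
        · rw [dif_pos h, if_pos h]
        · rw [dif_neg (by omega), dif_pos h, if_neg (by omega), if_pos h]
        · rw [dif_neg (by omega), dif_neg (by omega), if_neg (by omega), if_neg (by omega)]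
      have hvb := hv ⟨n - 1, hn1⟩
      have hiff : v ⟨n - 1, hn1⟩ ≤ (m : ℤ) ↔ lmap (v ⟨n - 1, hn1⟩) ≤ (m : ℤ) - 1 := by
        unfold lmap
        omega
      simp only [Lbar]
      rw [hlast, hcs k]
      rcases Nat.lt_trichotomy (k : ℕ) j with h | h | h
      · rw [psiAux_eval_lt hn _ _ k h, hu_lt k h]
        split_ifs <;> first | rfl | omega
      · rw [psiAux_eval_eq hn _ _ k h, hu_ge ⟨n - 1, hn1⟩ hj]
        unfold cLfun
        by_cases hA : v ⟨n - 1, hn1⟩ ≤ (m : ℤ)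
        · rw [if_pos hA, if_pos (hiff.mp hA), if_neg (by omega), if_neg (by omega), if_pos h]
          unfold lmap
          rcases hη with he | he <;> subst he <;> simp <;> omega
        · rw [if_neg hA, if_neg (fun hc => hA (hiff.mpr hc)), if_pos (by omega),
            if_neg (by omega), if_pos h]
      · have hk1n : (k : ℕ) - 1 < n := by omega
        rw [psiAux_eval_gt hn _ _ k h, hu_ge ⟨(k : ℕ) - 1, hk1n⟩ (show j ≤ (k : ℕ) - 1 by omega)]
        split_ifs <;> first | rfl | omega
  · refine ⟨psiAux n j hn (cRfun η (m : ℤ)), psiAux_isBoxMap m n j hm hn hj _ ?_ ?_, ?_⟩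
    · intro a h1 h2
      unfold cRfun
      rcases hη with he | he <;> subst he <;> split_ifs <;> constructor <;> simp <;> omega
    · intro a b hab
      unfold cRfun
      rcases hη with he | he <;> subst he <;> split_ifs <;> simp <;> omega
    · intro v hv
      funext k
      have hkn := k.isLt
      set w := Fin.insertNth (α := fun _ => ℤ) (⟨j, by omega⟩ : Fin (n + 1))
        (η * ((m : ℤ) + 1)) v with hw
      set u : Fin n → ℤ := fun k : Fin n =>
        if (k : ℕ) < j then v k else rmap (m : ℤ) (v k) with hu
      clear_value w u
      have hu_lt : ∀ k' : Fin n, (k' : ℕ) < j → u k' = v k' := by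
        intro k' hk'
        simp only [hu]
        rw [if_pos hk']
      have hu_ge : ∀ k' : Fin n, j ≤ (k' : ℕ) → u k' = rmap (m : ℤ) (v k') := by
        intro k' hk'
        simp only [hu]
        rw [if_neg (by omega)]
      have hlast : w (Fin.last n) = v ⟨n - 1, hn1⟩ := by
        rw [hw, insertNth_eval]
        rw [dif_neg (by simp [Fin.val_last]; omega), dif_neg (by simp [Fin.val_last]; omega)]
        exact congrArg v (Fin.ext (by simp [Fin.val_last]))
      have hcs : ∀ k' : Fin n, w k'.castSucc =
          if (k' : ℕ) < j then v k'
          else if (k' : ℕ) = j then η * ((m : ℤ) + 1)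
          else v ⟨(k' : ℕ) - 1, by have := k'.isLt; omega⟩ := by
        intro k'
        rw [hw, insertNth_eval]
        simp only [Fin.coe_castSucc]
        rcases Nat.lt_trichotomy (k' : ℕ) j with h | h | h
        · rw [dif_pos h, if_pos h]
        · rw [dif_neg (by omega), dif_pos h, if_neg (by omega), if_pos h]
        · rw [dif_neg (by omega), dif_neg (by omega), if_neg (by omega), if_neg (by omega)]
      have hvb := hv ⟨n - 1, hn1⟩
      have hiff : v ⟨n - 1, hn1⟩ = 0 ↔ rmap (m : ℤ) (v ⟨n - 1, hn1⟩) = 0 := by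
        unfold rmap
        omega
      simp only [Rbar]
      rw [hlast, hcs k]
      rcases Nat.lt_trichotomy (k : ℕ) j with h | h | h
      · rw [psiAux_eval_lt hn _ _ k h, hu_lt k h]
        split_ifs <;> first | rfl | omega
      · rw [psiAux_eval_eq hn _ _ k h, hu_ge ⟨n - 1, hn1⟩ hj]
        unfold cRfun
        by_cases hA : v ⟨n - 1, hn1⟩ = 0
        · rw [if_pos hA, if_pos (hiff.mp hA), if_neg (by omega), if_neg (by omega), if_pos h]
          unfold rmap
          rcases hη with he | he <;> subst he <;> simp <;> omega
        · rw [if_neg hA, if_neg (fun hc => hA (hiff.mpr hc)), if_pos (by omega),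
            if_neg (by omega), if_pos h]
      · have hk1n : (k : ℕ) - 1 < n := by omega
        rw [psiAux_eval_gt hn _ _ k h, hu_ge ⟨(k : ℕ) - 1, hk1n⟩ (show j ≤ (k : ℕ) - 1 by omega)]
        split_ifs <;> first | rfl | omega
end

section
/- The nerve functors reflect isomorphisms: let f : G → H be a graph map. Suppose either (1) there is m ≥ 1 such that for every n ≥ 0 post-composition with f gives a bijection from the set of graph maps I_m^{□n} → G to the set of graph maps I_m^{□n} → H, or (2) for every n ≥ 0 post-composition with f gives a bijection from the set of stable graph maps I_∞^{□n} → G to the set of stable graph maps I_∞^{□n} → H. Then f is an isomorphism of graphs: f is a bijection on vertices and its inverse function is a graph map H → G. -/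
theorem IsGraphMap.comp {U V W : Type*} {G : SimpleGraph U} {H : SimpleGraph V}
    {K : SimpleGraph W} {f : U → V} {g : V → W}
    (hf : IsGraphMap G H f) (hg : IsGraphMap H K g) : IsGraphMap G K (g ∘ f) := by
  intro v w h
  rcases hf h with he | ha
  · exact Or.inl (congrArg g he)
  · exact hg ha

/-- The interval graph `I_m`, with vertices `{0, …, m}` and edges `i ∼ i+1`. -/
def intervalG (m : ℕ) : SimpleGraph (Fin (m + 1)) where
  Adj i j := (i : ℕ) + 1 = (j : ℕ) ∨ (j : ℕ) + 1 = (i : ℕ)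
  symm := ⟨fun i j h => Or.symm h⟩
  loopless := ⟨fun i h => by rcases h with h | h <;> omega⟩

/-- The infinite interval graph `I_∞`, with vertices `ℤ` and edges `i ∼ i+1`. -/
def intLineG : SimpleGraph ℤ where
  Adj a b := a + 1 = b ∨ b + 1 = a
  symm := ⟨fun a b h => Or.symm h⟩
  loopless := ⟨fun a h => by rcases h with h | h <;> omega⟩

/-- The `n`-fold box power `G^{□n}` of a graph. -/
def boxPow {V : Type*} (G : SimpleGraph V) (n : ℕ) : SimpleGraph (Fin n → V) where
  Adj v w := ∃ i, G.Adj (v i) (w i) ∧ ∀ j, j ≠ i → v j = w j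
  symm := ⟨by
    rintro v w ⟨i, ha, he⟩
    exact ⟨i, ha.symm, fun j hj => (he j hj).symm⟩⟩
  loopless := ⟨by
    rintro v ⟨i, ha, -⟩
    exact G.ne_of_adj ha rfl⟩

/-- A map `g : I_∞^{□n} → G` is stable: in each direction `(i, ε)` it is eventually
constant. -/
def Stable {V : Type*} (n : ℕ) (g : (Fin n → ℤ) → V) : Prop :=
  ∀ (i : Fin n) (ε : Bool), ∃ M : ℕ, ∀ (w : Fin n → ℤ) (t : ℤ), (M : ℤ) < t →
    g (Function.update w i (if ε then t else -t)) =
      g (Function.update w i (if ε then (M : ℤ) else -(M : ℤ)))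

theorem Stable.comp {V W : Type*} {n : ℕ} {g : (Fin n → ℤ) → V} (hg : Stable n g)
    (f : V → W) : Stable n (f ∘ g) := by
  intro i ε
  obtain ⟨M, hM⟩ := hg i ε
  exact ⟨M, fun w t ht => congrArg f (hM w t ht)⟩

open Function

lemma isGraphMap_boxPow_zero {X V : Type*} (K : SimpleGraph X) (G : SimpleGraph V)
    (g : (Fin 0 → X) → V) : IsGraphMap (boxPow K 0) G g := by
  rintro v w ⟨i, -, -⟩
  exact i.elim0

lemma stable_zero {V : Type*} (g : (Fin 0 → ℤ) → V) : Stable 0 g := fun i => i.elim0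

lemma isGraphMap_eval {X : Type*} (K : SimpleGraph X) {n : ℕ} (i : Fin n) :
    IsGraphMap (boxPow K n) K (fun x => x i) := by
  rintro x y ⟨j, hadj, hrest⟩
  by_cases hij : i = j
  · exact Or.inr (hij ▸ hadj)
  · exact Or.inl (hrest i hij)

lemma boxPow_one_adj_const {X : Type*} {K : SimpleGraph X} {a b : X} (hab : K.Adj a b) :
    (boxPow K 1).Adj (fun _ => a) (fun _ => b) :=
  ⟨0, hab, fun j hj => absurd (Subsingleton.elim j 0) hj⟩

lemma isGraphMap_intervalG_coe (m : ℕ) :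
    IsGraphMap (intervalG m) intLineG (fun i => ((i : ℕ) : ℤ)) := by
  rintro i j (h | h) <;> right <;>
  change ((i : ℕ) : ℤ) + 1 = ((j : ℕ) : ℤ) ∨ ((j : ℕ) : ℤ) + 1 = ((i : ℕ) : ℤ) <;>
  omega

def lineStep {W : Type*} (v w : W) (t : ℤ) : W := if t ≤ 0 then v else w

lemma isGraphMap_lineStep {W : Type*} {H : SimpleGraph W} {v w : W} (hvw : H.Adj v w) :
    IsGraphMap intLineG H (lineStep v w) := by
  rintro s t hst
  unfold lineStep
  split_ifs
  · exact Or.inl rfl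
  · exact Or.inr hvw
  · exact Or.inr hvw.symm
  · exact Or.inl rfl

lemma stable_lineStep_comp_eval {W : Type*} (v w : W) {n : ℕ} (i : Fin n) :
    Stable n (fun x => lineStep v w (x i)) := by
  intro j ε
  refine ⟨1, fun u t ht => ?_⟩
  by_cases hij : i = j
  · subst hij
    cases ε <;> simp only [update_self, lineStep] <;> split_ifs <;> first | rfl | omega
  · simp only [update_of_ne hij]

lemma bijective_of_bijective_postcomp {U V W : Type*} [Unique U] {P : (U → V) → Prop}
    {Q : (U → W) → Prop} (hP : ∀ g, P g) (hQ : ∀ h, Q h) {f : V → W}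
    {F : Subtype P → Subtype Q} (hF : ∀ g, (F g).1 = f ∘ g.1) (hbij : Bijective F) :
    Bijective f := by
  refine ⟨fun a b hab => ?_, fun w => ?_⟩
  · have hconst : F ⟨fun _ => a, hP _⟩ = F ⟨fun _ => b, hP _⟩ :=
      Subtype.ext (by simp only [hF, comp_def, hab])
    exact congrFun (congrArg Subtype.val (hbij.1 hconst)) default
  · obtain ⟨g, hg⟩ := hbij.2 ⟨fun _ => w, hQ _⟩
    refine ⟨g.1 default, ?_⟩
    simpa only [hF, comp_apply] using congrFun (congrArg Subtype.val hg) default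

lemma exists_adj_lift_of_surjective_postcomp {X V W : Type*} {K : SimpleGraph X}
    {G : SimpleGraph V} {H : SimpleGraph W} {f : V → W} {P : (X → V) → Prop}
    {Q : (X → W) → Prop} (hP : ∀ g, P g → IsGraphMap K G g) {F : Subtype P → Subtype Q}
    (hF : ∀ g, (F g).1 = f ∘ g.1) (hsurj : Surjective F) {x y : X} (hxy : K.Adj x y)
    {c : X → W} (hc : Q c) {v w : W} (hvw : H.Adj v w) (hcx : c x = v) (hcy : c y = w) :
    ∃ a b, f a = v ∧ f b = w ∧ G.Adj a b := by
  obtain ⟨g, hg⟩ := hsurj ⟨c, hc⟩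
  have hfg : f ∘ g.1 = c := (hF g).symm.trans (congrArg Subtype.val hg)
  have hx : f (g.1 x) = v := (congrFun hfg x).trans hcx
  have hy : f (g.1 y) = w := (congrFun hfg y).trans hcy
  refine ⟨_, _, hx, hy, (hP g g.2 hxy).resolve_left fun he => hvw.ne ?_⟩
  rw [← hx, ← hy, he]

lemma exists_isGraphMap_inverse {V W : Type*} {G : SimpleGraph V} {H : SimpleGraph W}
    {f : V → W} (hbij : Bijective f)
    (hlift : ∀ v w, H.Adj v w → ∃ a b, f a = v ∧ f b = w ∧ G.Adj a b) :
    ∃ finv : W → V, IsGraphMap H G finv ∧ LeftInverse finv f ∧ RightInverse finv f := by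
  have hleft := leftInverse_surjInv hbij
  refine ⟨surjInv hbij.2, fun v w hvw => ?_, hleft, rightInverse_surjInv hbij.2⟩
  obtain ⟨a, b, rfl, rfl, hab⟩ := hlift v w hvw
  rw [hleft a, hleft b]
  exact Or.inr hab

/-- The nerve functors reflect isomorphisms: if post-composition with a graph map
`f : G → H` is a bijection on `m`-cubes `I_m^{□n} → ·` for all `n` (for some `m ≥ 1`), or
on stable cubes `I_∞^{□n} → ·` for all `n`, then `f` is an isomorphism of graphs. -/
theorem nerve_reflects_isos {V W : Type*} (G : SimpleGraph V) (H : SimpleGraph W)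
    (f : V → W) (hf : IsGraphMap G H f)
    (h : (∃ m : ℕ, 1 ≤ m ∧ ∀ n : ℕ,
        Function.Bijective
          (fun g : {g : (Fin n → Fin (m + 1)) → V // IsGraphMap (boxPow (intervalG m) n) G g} =>
            (⟨f ∘ g.1, g.2.comp hf⟩ :
              {h : (Fin n → Fin (m + 1)) → W // IsGraphMap (boxPow (intervalG m) n) H h}))) ∨
      (∀ n : ℕ,
        Function.Bijective
          (fun g : {g : (Fin n → ℤ) → V // IsGraphMap (boxPow intLineG n) G g ∧ Stable n g} =>
            (⟨f ∘ g.1, g.2.1.comp hf, g.2.2.comp f⟩ :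
              {h : (Fin n → ℤ) → W // IsGraphMap (boxPow intLineG n) H h ∧ Stable n h})))) :
    Function.Bijective f ∧
      ∃ finv : W → V, IsGraphMap H G finv ∧
        Function.LeftInverse finv f ∧ Function.RightInverse finv f := by
  suffices hiso : Bijective f ∧
      ∀ v w, H.Adj v w → ∃ a b, f a = v ∧ f b = w ∧ G.Adj a b from
    ⟨hiso.1, exists_isGraphMap_inverse hiso.1 hiso.2⟩
  rcases h with ⟨m, hm, hbij⟩ | hbij
  · refine ⟨bijective_of_bijective_postcomp (isGraphMap_boxPow_zero _ _)
      (isGraphMap_boxPow_zero _ _) (fun _ => rfl) (hbij 0), fun v w hvw => ?_⟩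
    have hstep := ((isGraphMap_eval (intervalG m) (0 : Fin 1)).comp
      (isGraphMap_intervalG_coe m)).comp (isGraphMap_lineStep hvw)
    exact exists_adj_lift_of_surjective_postcomp (fun _ hg => hg) (fun _ => rfl) (hbij 1).2
      (boxPow_one_adj_const (a := (0 : Fin (m + 1))) (b := ⟨1, by omega⟩) (Or.inl rfl))
      hstep hvw (by simp [lineStep]) (by simp [lineStep])
  · refine ⟨bijective_of_bijective_postcomp
      (fun g => ⟨isGraphMap_boxPow_zero _ _ g, stable_zero g⟩)
      (fun g => ⟨isGraphMap_boxPow_zero _ _ g, stable_zero g⟩) (fun _ => rfl) (hbij 0),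
      fun v w hvw => ?_⟩
    exact exists_adj_lift_of_surjective_postcomp (fun _ hg => hg.1) (fun _ => rfl) (hbij 1).2
      (boxPow_one_adj_const (a := (0 : ℤ)) (b := 1) (Or.inl rfl))
      ⟨(isGraphMap_eval intLineG (0 : Fin 1)).comp (isGraphMap_lineStep hvw),
        stable_lineStep_comp_eval v w (0 : Fin 1)⟩ hvw (by simp [lineStep]) (by simp [lineStep])
end
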